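/- Translation soundness for mixins: let M ≡ λc.Y(λt.λs.(c s) ⊕ R) be a mixin (with R a record whose free variables are contained in {c, t, s}), and suppose there are types σ, ρ₁, ρ₂ ∈ 𝕋 not containing + and with all labels in 𝓛, with lbl(ρ₂) = lbl(R), such that ⊢ M : (σ → ρ∩ρ₁) → (σ → ρ+ρ₂) is derivable in Λ_R for every record type ρ ∈ 𝕋_R. Define the 𝕋_C type τ_M ≡ ((⟦σ⟧→⟦ρ₁⟧) → (⟦σ⟧→⟦ρ₂⟧)) ∩ ⋂_{l ∈ 𝓛∖lbl(R)} ((⟦σ⟧→⟨⟨l(α_l)⟩⟩) → (⟦σ⟧→⟨⟨l(α_l)⟩⟩)), where the α_l are distinct type variables. Then for every substitution S of type variables by 𝕋_C types and every type τ ∈ 𝕋 such that ⟦τ⟧ = S(τ_M) (syntactically), the judgment ⊢ M : τ is derivable in Λ_R. -/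

import Mathlib

/-- Terms of the record calculus `Λ_R`, with de Bruijn indices for bound variables
(so that terms are identified up to α-conversion) and labels drawn from `ℕ`.
Records are finite lists of label/term pairs; in `merge M fs` the right operand
is syntactically a record. -/
inductive Tm where
  | var : Nat → Tm
  | lam : Tm → Tm
  | app : Tm → Tm → Tm
  | sel : Tm → Nat → Tm
  | rcd : List (Nat × Tm) → Tm
  | merge : Tm → List (Nat × Tm) → Tm

namespace Tm

/-- The list of field labels of a record. -/
def keys (fs : List (Nat × Tm)) : List Nat := fs.map Prod.fst

/-- The set of field labels `lbl(R)` of a record. -/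
def lblR (fs : List (Nat × Tm)) : Finset Nat := (keys fs).toFinset

/-- Record merge on field lists: fields of the first record whose label does not
occur in the second record, followed by all fields of the second record. -/
def mergeFields (fs gs : List (Nat × Tm)) : List (Nat × Tm) :=
  fs.filter (fun p => decide (p.1 ∉ keys gs)) ++ gs

end Tm
/-- Intersection and record types `𝕋`. Record types are the types satisfying `IsRec`. -/
inductive Ty where
  | const : Nat → Ty
  | omega : Ty
  | arrow : Ty → Ty → Ty
  | inter : Ty → Ty → Ty
  | empty : Ty
  | fld : Nat → Ty → Ty
  | merge : Ty → Ty → Ty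
deriving DecidableEq

/-- The record types `𝕋_R ⊆ 𝕋`. -/
inductive IsRec : Ty → Prop where
  | empty : IsRec .empty
  | fld (l : Nat) (σ : Ty) : IsRec (.fld l σ)
  | merge {ρ₁ ρ₂ : Ty} : IsRec ρ₁ → IsRec ρ₂ → IsRec (.merge ρ₁ ρ₂)
  | inter {ρ₁ ρ₂ : Ty} : IsRec ρ₁ → IsRec ρ₂ → IsRec (.inter ρ₁ ρ₂)

/-- Subtyping on `𝕋`: the least preorder satisfying the BCD axioms together with
the record and record-merge axioms. -/
inductive TySub : Ty → Ty → Prop where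
  | refl (σ : Ty) : TySub σ σ
  | trans {σ τ υ : Ty} : TySub σ τ → TySub τ υ → TySub σ υ
  | le_omega (σ : Ty) : TySub σ .omega
  | omega_arrow : TySub .omega (.arrow .omega .omega)
  | inter_left (σ τ : Ty) : TySub (.inter σ τ) σ
  | inter_right (σ τ : Ty) : TySub (.inter σ τ) τ
  | le_inter {σ τ₁ τ₂ : Ty} : TySub σ τ₁ → TySub σ τ₂ → TySub σ (.inter τ₁ τ₂)
  | arrow_inter (σ τ₁ τ₂ : Ty) :
      TySub (.inter (.arrow σ τ₁) (.arrow σ τ₂)) (.arrow σ (.inter τ₁ τ₂))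
  | arrow_mono {σ₁ σ₂ τ₁ τ₂ : Ty} : TySub σ₂ σ₁ → TySub τ₁ τ₂ →
      TySub (.arrow σ₁ τ₁) (.arrow σ₂ τ₂)
  | fld_empty (l : Nat) (σ : Ty) : TySub (.fld l σ) .empty
  | fld_inter (l : Nat) (σ τ : Ty) :
      TySub (.inter (.fld l σ) (.fld l τ)) (.fld l (.inter σ τ))
  | fld_mono {σ τ : Ty} (l : Nat) : TySub σ τ → TySub (.fld l σ) (.fld l τ)
  | merge_empty_r {ρ : Ty} : IsRec ρ → TySub (.merge ρ .empty) ρ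
  | merge_empty_r' {ρ : Ty} : IsRec ρ → TySub ρ (.merge ρ .empty)
  | merge_empty_l {ρ : Ty} : IsRec ρ → TySub (.merge .empty ρ) ρ
  | merge_empty_l' {ρ : Ty} : IsRec ρ → TySub ρ (.merge .empty ρ)
  | merge_assoc {ρ₁ ρ₂ ρ₃ : Ty} : IsRec ρ₁ → IsRec ρ₂ → IsRec ρ₃ →
      TySub (.merge (.merge ρ₁ ρ₂) ρ₃) (.merge ρ₁ (.merge ρ₂ ρ₃))
  | merge_assoc' {ρ₁ ρ₂ ρ₃ : Ty} : IsRec ρ₁ → IsRec ρ₂ → IsRec ρ₃ →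
      TySub (.merge ρ₁ (.merge ρ₂ ρ₃)) (.merge (.merge ρ₁ ρ₂) ρ₃)
  | merge_inter {ρ₁ ρ₂ ρ₃ : Ty} : IsRec ρ₁ → IsRec ρ₂ → IsRec ρ₃ →
      TySub (.merge (.inter ρ₁ ρ₂) ρ₃) (.inter (.merge ρ₁ ρ₃) (.merge ρ₂ ρ₃))
  | merge_inter' {ρ₁ ρ₂ ρ₃ : Ty} : IsRec ρ₁ → IsRec ρ₂ → IsRec ρ₃ →
      TySub (.inter (.merge ρ₁ ρ₃) (.merge ρ₂ ρ₃)) (.merge (.inter ρ₁ ρ₂) ρ₃)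
  | fld_absorb {ρ : Ty} (l : Nat) (σ τ : Ty) : IsRec ρ →
      TySub (.merge (.fld l σ) (.inter (.fld l τ) ρ)) (.inter (.fld l τ) ρ)
  | fld_absorb' {ρ : Ty} (l : Nat) (σ τ : Ty) : IsRec ρ →
      TySub (.inter (.fld l τ) ρ) (.merge (.fld l σ) (.inter (.fld l τ) ρ))
  | fld_comm {ρ : Ty} {l l' : Nat} (σ τ : Ty) : l ≠ l' → IsRec ρ →
      TySub (.merge (.fld l σ) (.inter (.fld l' τ) ρ))
          (.inter (.fld l' τ) (.merge (.fld l σ) ρ))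
  | fld_comm' {ρ : Ty} {l l' : Nat} (σ τ : Ty) : l ≠ l' → IsRec ρ →
      TySub (.inter (.fld l' τ) (.merge (.fld l σ) ρ))
          (.merge (.fld l σ) (.inter (.fld l' τ) ρ))
  | merge_mono_l {ρ₁ ρ₂ ρ : Ty} : IsRec ρ₁ → IsRec ρ₂ → IsRec ρ →
      TySub ρ₁ ρ₂ → TySub (.merge ρ₁ ρ) (.merge ρ₂ ρ)
  | merge_congr_r {ρ ρ₁ ρ₂ : Ty} : IsRec ρ → IsRec ρ₁ → IsRec ρ₂ →
      TySub ρ₁ ρ₂ → TySub ρ₂ ρ₁ → TySub (.merge ρ ρ₁) (.merge ρ ρ₂)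

/-- Type equality: mutual subtyping. -/
def TyEq (σ τ : Ty) : Prop := TySub σ τ ∧ TySub τ σ
/-- The label map on record types. -/
def lbl : Ty → Finset Nat
  | .const _ => ∅
  | .omega => ∅
  | .arrow _ _ => ∅
  | .empty => ∅
  | .fld l _ => {l}
  | .inter ρ₁ ρ₂ => lbl ρ₁ ∪ lbl ρ₂
  | .merge ρ₁ ρ₂ => lbl ρ₁ ∪ lbl ρ₂
/-- The type assignment system for `Λ_R`. With de Bruijn indices, a basis `Γ` is a
list of types, extension `Γ, x:σ` is `σ :: Γ`, and the axiom rule looks up the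
type of a variable index in `Γ`. -/
inductive Typing : List Ty → Tm → Ty → Prop where
  | var {Γ : List Ty} {x : Nat} {σ : Ty} :
      Γ[x]? = some σ → Typing Γ (.var x) σ
  | lam {Γ : List Ty} {M : Tm} {σ τ : Ty} :
      Typing (σ :: Γ) M τ → Typing Γ (.lam M) (.arrow σ τ)
  | app {Γ : List Ty} {M N : Tm} {σ τ : Ty} :
      Typing Γ M (.arrow σ τ) → Typing Γ N σ → Typing Γ (.app M N) τ
  | inter {Γ : List Ty} {M : Tm} {σ τ : Ty} :
      Typing Γ M σ → Typing Γ M τ → Typing Γ M (.inter σ τ)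
  | omega {Γ : List Ty} (M : Tm) : Typing Γ M .omega
  | sub {Γ : List Ty} {M : Tm} {σ τ : Ty} :
      Typing Γ M σ → TySub σ τ → Typing Γ M τ
  | empty {Γ : List Ty} (fs : List (Nat × Tm)) : Typing Γ (.rcd fs) .empty
  | rcd {Γ : List Ty} {fs : List (Nat × Tm)} {l : Nat} {M : Tm} {σ : Ty} :
      List.lookup l fs = some M → Typing Γ M σ → Typing Γ (.rcd fs) (.fld l σ)
  | sel {Γ : List Ty} {M : Tm} {l : Nat} {σ : Ty} :
      Typing Γ M (.fld l σ) → Typing Γ (.sel M l) σ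
  | merge {Γ : List Ty} {M : Tm} {fs : List (Nat × Tm)} {ρ₁ ρ₂ : Ty} :
      Typing Γ M ρ₁ → Typing Γ (.rcd fs) ρ₂ → IsRec ρ₁ → IsRec ρ₂ →
      Tm.lblR fs = lbl ρ₂ → Typing Γ (.merge M fs) (.merge ρ₁ ρ₂)
/-- `FVBelow k M`: all free (de Bruijn) variables of `M` are `< k`. -/
inductive FVBelow : Nat → Tm → Prop where
  | var {k x : Nat} : x < k → FVBelow k (.var x)
  | lam {k : Nat} {M : Tm} : FVBelow (k + 1) M → FVBelow k (.lam M)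
  | app {k : Nat} {M N : Tm} : FVBelow k M → FVBelow k N → FVBelow k (.app M N)
  | sel {k : Nat} {M : Tm} (l : Nat) : FVBelow k M → FVBelow k (.sel M l)
  | rcd {k : Nat} {fs : List (Nat × Tm)} :
      (∀ p ∈ fs, FVBelow k p.2) → FVBelow k (.rcd fs)
  | merge {k : Nat} {M : Tm} {fs : List (Nat × Tm)} :
      FVBelow k M → (∀ p ∈ fs, FVBelow k p.2) → FVBelow k (.merge M fs)

/-- Curry's fixed point combinator `Y ≡ λf.(λx.f(x x))(λx.f(x x))`. -/
def Ycomb : Tm :=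
  .lam (.app (.lam (.app (.var 1) (.app (.var 0) (.var 0))))
             (.lam (.app (.var 1) (.app (.var 0) (.var 0)))))

/-- The mixin `M ≡ λc. Y (λt. λs. (c s) ⊕ R)` determined by the difference record `R`.
Under the three binders, `c` is de Bruijn index 2, `t` is 1 and `s` is 0. -/
def mixinTm (R : List (Nat × Tm)) : Tm :=
  .lam (.app Ycomb (.lam (.lam (.merge (.app (.var 2) (.var 0)) R))))
/-- Intersection types with constructors `𝕋_C`: constants, type variables, `ω`,
arrows, intersections and unary constructors (constructor names in `Option ℕ`: `none` is the distinguished record constructor `⟨⟨·⟩⟩` and `some l` is the label constructor `l(·)` for a label `l`). -/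
inductive TyC where
  | const : Nat → TyC
  | tvar : Nat → TyC
  | omega : TyC
  | arrow : TyC → TyC → TyC
  | inter : TyC → TyC → TyC
  | ctor : Option Nat → TyC → TyC
deriving DecidableEq

/-- Subtyping on `𝕋_C`: the least preorder with the BCD axioms together with
covariance of constructors and distribution of constructors over intersection. -/
inductive SubC : TyC → TyC → Prop where
  | refl (σ : TyC) : SubC σ σ
  | trans {σ τ υ : TyC} : SubC σ τ → SubC τ υ → SubC σ υ
  | le_omega (σ : TyC) : SubC σ .omega
  | omega_arrow : SubC .omega (.arrow .omega .omega)
  | inter_left (σ τ : TyC) : SubC (.inter σ τ) σ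
  | inter_right (σ τ : TyC) : SubC (.inter σ τ) τ
  | le_inter {σ τ₁ τ₂ : TyC} : SubC σ τ₁ → SubC σ τ₂ → SubC σ (.inter τ₁ τ₂)
  | arrow_inter (σ τ₁ τ₂ : TyC) :
      SubC (.inter (.arrow σ τ₁) (.arrow σ τ₂)) (.arrow σ (.inter τ₁ τ₂))
  | arrow_mono {σ₁ σ₂ τ₁ τ₂ : TyC} : SubC σ₂ σ₁ → SubC τ₁ τ₂ →
      SubC (.arrow σ₁ τ₁) (.arrow σ₂ τ₂)
  | ctor_mono {τ₁ τ₂ : TyC} (c : Option Nat) : SubC τ₁ τ₂ → SubC (.ctor c τ₁) (.ctor c τ₂)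
  | ctor_inter (c : Option Nat) (τ₁ τ₂ : TyC) :
      SubC (.inter (.ctor c τ₁) (.ctor c τ₂)) (.ctor c (.inter τ₁ τ₂))

/-- Type equality on `𝕋_C`: mutual subtyping. -/
def TyCEq (σ τ : TyC) : Prop := SubC σ τ ∧ SubC τ σ

/-- Finite intersection of a list of `𝕋_C` types (`ω` for the empty list). -/
def interListC : List TyC → TyC
  | [] => .omega
  | [π] => π
  | π :: π' :: rest => .inter π (interListC (π' :: rest))
/-- The partial translation `⟦·⟧ : 𝕋 → 𝕋_C` relative to the finite label set `𝓛`: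
defined homomorphically on constants, `ω`, arrows and intersections, with
`⟦⟨l:τ⟩⟧ = ⟨⟨l(⟦τ⟧)⟩⟩` for `l ∈ 𝓛` and `⟦⟨⟩⟧ = ⟨⟨ω⟩⟩`; undefined (`none`) on types
containing the record-merge type constructor `+` or a label outside `𝓛`. -/
def interp (L : Finset Nat) : Ty → Option TyC
  | .const a => some (.const a)
  | .omega => some .omega
  | .arrow σ τ => do
      let s ← interp L σ
      let t ← interp L τ
      pure (.arrow s t)
  | .inter σ τ => do
      let s ← interp L σ
      let t ← interp L τ
      pure (.inter s t)
  | .empty => some (.ctor none .omega)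
  | .fld l σ =>
      if l ∈ L then (interp L σ).map (fun t => .ctor none (.ctor (some l) t))
      else none
  | .merge _ _ => none

/-- Application of a substitution of type variables by `𝕋_C` types. -/
def substC (S : Nat → TyC) : TyC → TyC
  | .const a => .const a
  | .tvar α => S α
  | .omega => .omega
  | .arrow σ τ => .arrow (substC S σ) (substC S τ)
  | .inter σ τ => .inter (substC S σ) (substC S τ)
  | .ctor c τ => .ctor c (substC S τ)

/-- The schematic combinator type
`τ_M ≡ ((⟦σ⟧→⟦ρ₁⟧) → (⟦σ⟧→⟦ρ₂⟧)) ∩ ⋂_{l ∈ 𝓛∖lbl(R)} ((⟦σ⟧→⟨⟨l(α_l)⟩⟩) → (⟦σ⟧→⟨⟨l(α_l)⟩⟩))`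
of a mixin with difference record `R`, where the pairwise distinct type
variables `α_l` are indexed by the labels `l` themselves. -/
def tauM (L : Finset Nat) (R : List (Nat × Tm)) (σ' ρ₁' ρ₂' : TyC) : TyC :=
  .inter (.arrow (.arrow σ' ρ₁') (.arrow σ' ρ₂'))
    (interListC (((L \ Tm.lblR R).sort (· ≤ ·)).map fun l =>
      .arrow (.arrow σ' (.ctor none (.ctor (some l) (.tvar l))))
             (.arrow σ' (.ctor none (.ctor (some l) (.tvar l))))))


/-!
The first conjunct of `τ_M` contains no type variables, so `S` fixes it, and since `⟦·⟧` is
injective its only preimage is `(σ → ρ₁) → (σ → ρ₂)`; this follows from the hypothesis at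
`ρ = ⟨⟩` because `ρ₁ ≤ ⟨⟩ ∩ ρ₁` and `⟨⟩ + ρ₂ = ρ₂`. A preimage of a substituted conjunct for a
label `l ∉ lbl(R)` has the form `(A → ⟨l:γ⟩) → (A → ⟨l:γ⟩)`, and the mixin has this type
directly: `c s : ⟨l:γ⟩`, the record `R` has type `⋂_{l' ∈ lbl(R)} ⟨l':ω⟩`, which `⟨l:γ⟩ + ·`
absorbs because `l` is not among its labels, and `Y F : A` as soon as `F : ω → A`.
-/

section Interp

variable {L : Finset Nat}

theorem eq_omega_of_interp_eq_some {τ : Ty} (h : interp L τ = some .omega) : τ = .omega := by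
  cases τ <;> simp_all [interp, Option.bind_eq_some_iff]

theorem eq_arrow_of_interp_eq_some {τ : Ty} {a b : TyC} (h : interp L τ = some (.arrow a b)) :
    ∃ τ₁ τ₂, τ = .arrow τ₁ τ₂ ∧ interp L τ₁ = some a ∧ interp L τ₂ = some b := by
  cases τ <;> simp_all [interp, Option.bind_eq_some_iff]

theorem eq_inter_of_interp_eq_some {τ : Ty} {a b : TyC} (h : interp L τ = some (.inter a b)) :
    ∃ τ₁ τ₂, τ = .inter τ₁ τ₂ ∧ interp L τ₁ = some a ∧ interp L τ₂ = some b := by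
  cases τ <;> simp_all [interp, Option.bind_eq_some_iff]

theorem eq_fld_of_interp_eq_some {τ : Ty} {l : Nat} {u : TyC}
    (h : interp L τ = some (.ctor none (.ctor (some l) u))) :
    ∃ γ, τ = .fld l γ ∧ interp L γ = some u := by
  cases τ <;> simp_all [interp, Option.bind_eq_some_iff]

theorem eq_of_interp_eq_some {σ τ : Ty} {t : TyC} (hσ : interp L σ = some t)
    (hτ : interp L τ = some t) : σ = τ := by
  induction σ generalizing τ t <;> cases τ <;>
    aesop (add norm simp [interp, Option.bind_eq_some_iff])

theorem substC_eq_self_of_interp_eq_some (S : Nat → TyC) {σ : Ty} {t : TyC}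
    (h : interp L σ = some t) : substC S t = t := by
  induction σ generalizing t <;> aesop (add norm simp [interp, Option.bind_eq_some_iff, substC])

theorem typing_of_interp_eq_interListC {Γ : List Ty} {M : Tm} :
    ∀ {πs : List TyC}, (∀ π ∈ πs, ∀ τ, interp L τ = some π → Typing Γ M τ) →
      ∀ {τ : Ty}, interp L τ = some (interListC πs) → Typing Γ M τ
  | [], _, _, hτ => eq_omega_of_interp_eq_some hτ ▸ .omega M
  | [π], h, τ, hτ => h π (by simp) τ hτ
  | π :: π' :: πs, h, _, hτ => by
    obtain ⟨τ₁, τ₂, rfl, h₁, h₂⟩ := eq_inter_of_interp_eq_some hτ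
    exact .inter (h π (by simp) τ₁ h₁)
      (typing_of_interp_eq_interListC (fun ρ hρ => h ρ (List.mem_cons_of_mem π hρ)) h₂)

end Interp

theorem substC_interListC (S : Nat → TyC) :
    ∀ πs : List TyC, substC S (interListC πs) = interListC (πs.map (substC S))
  | [] => rfl
  | [_] => rfl
  | _ :: π' :: πs => by simp [interListC, substC, substC_interListC S (π' :: πs)]

theorem IsRec.le_empty {ρ : Ty} (h : IsRec ρ) : TySub ρ .empty := by
  induction h with
  | empty => exact .refl _
  | fld l σ => exact .fld_empty l σ
  | inter _ _ ih₁ _ => exact .trans (.inter_left _ _) ih₁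
  | merge h₁ h₂ ih₁ ih₂ =>
    exact .trans (.merge_mono_l h₁ .empty h₂ ih₁) (.trans (.merge_empty_l h₂) ih₂)

theorem Typing.app_Ycomb {Γ : List Ty} {N : Tm} {A : Ty} (h : Typing Γ N (.arrow .omega A)) :
    Typing Γ (.app Ycomb N) A :=
  .app (.lam (.app (.lam (.app (.var rfl) (.omega _))) (.omega _))) h

def omegaFields (ls : List Nat) : Ty :=
  ls.foldr (fun l ρ => .inter (.fld l .omega) ρ) .empty

theorem isRec_omegaFields : ∀ ls : List Nat, IsRec (omegaFields ls)
  | [] => .empty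
  | l :: ls => .inter (.fld l .omega) (isRec_omegaFields ls)

theorem lbl_omegaFields (ls : List Nat) : lbl (omegaFields ls) = ls.toFinset := by
  induction ls with
  | nil => rfl
  | cons l ls ih => simp_all [omegaFields, lbl]

theorem exists_lookup_of_mem_keys {l : Nat} {fs : List (Nat × Tm)} (h : l ∈ Tm.keys fs) :
    ∃ M, fs.lookup l = some M := by
  obtain ⟨p, hp, rfl⟩ := List.mem_map.mp h
  exact Option.isSome_iff_exists.mp (List.lookup_isSome_iff.mpr ⟨p, hp, beq_self_eq_true _⟩)

theorem Typing.rcd_omegaFields {Γ : List Ty} (fs : List (Nat × Tm)) :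
    ∀ ls : List Nat, (∀ l ∈ ls, l ∈ Tm.keys fs) → Typing Γ (.rcd fs) (omegaFields ls)
  | [], _ => .empty fs
  | l :: ls, h => by
    obtain ⟨M, hM⟩ := exists_lookup_of_mem_keys (h l List.mem_cons_self)
    exact .inter (.rcd hM (.omega M))
      (Typing.rcd_omegaFields fs ls fun l' hl' => h l' (List.mem_cons_of_mem _ hl'))

theorem TySub.merge_fld_omegaFields {l : Nat} {γ : Ty} :
    ∀ {ls : List Nat}, l ∉ ls → TySub (.merge (.fld l γ) (omegaFields ls)) (.fld l γ)
  | [], _ => .merge_empty_r (.fld l γ)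
  | l' :: ls, hl => by
    rw [List.mem_cons, not_or] at hl
    exact .trans (.fld_comm γ .omega hl.1 (isRec_omegaFields ls))
      (.trans (.inter_right _ _) (TySub.merge_fld_omegaFields hl.2))

theorem mixinTm_typing_arrow_fld {Γ : List Ty} {R : List (Nat × Tm)} {A γ : Ty} {l : Nat}
    (hl : l ∉ Tm.keys R) :
    Typing Γ (mixinTm R) (.arrow (.arrow A (.fld l γ)) (.arrow A (.fld l γ))) := by
  have hR : Typing (A :: .omega :: .arrow A (.fld l γ) :: Γ) (.rcd R) (omegaFields (Tm.keys R)) :=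
    Typing.rcd_omegaFields R _ fun _ => id
  refine .lam (.app_Ycomb (.lam (.lam (.sub ?_ (TySub.merge_fld_omegaFields hl)))))
  exact .merge (.app (.var rfl) (.var rfl)) hR (.fld l γ) (isRec_omegaFields _)
    (by rw [lbl_omegaFields]; rfl)

theorem mixinTm_typing_of_interp_eq_arrow_fld {L : Finset Nat} {Γ : List Ty} {R : List (Nat × Tm)}
    {l : Nat} {s u : TyC} {τ : Ty} (hl : l ∉ Tm.keys R)
    (hτ : interp L τ = some (.arrow (.arrow s (.ctor none (.ctor (some l) u)))
      (.arrow s (.ctor none (.ctor (some l) u))))) :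
    Typing Γ (mixinTm R) τ := by
  obtain ⟨τ₁, τ₂, rfl, h₁, h₂⟩ := eq_arrow_of_interp_eq_some hτ
  obtain ⟨A, B₁, rfl, hA, hB₁⟩ := eq_arrow_of_interp_eq_some h₁
  obtain ⟨A', B₂, rfl, hA', hB₂⟩ := eq_arrow_of_interp_eq_some h₂
  obtain ⟨γ, rfl, hγ⟩ := eq_fld_of_interp_eq_some hB₁
  obtain ⟨γ', rfl, hγ'⟩ := eq_fld_of_interp_eq_some hB₂
  obtain rfl := eq_of_interp_eq_some hA hA'
  obtain rfl := eq_of_interp_eq_some hγ hγ'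
  exact mixinTm_typing_arrow_fld hl

theorem translation_soundness_general (L : Finset Nat) (R : List (Nat × Tm))
    (σT ρ₁ ρ₂ : Ty) (hr₁ : IsRec ρ₁) (hr₂ : IsRec ρ₂)
    (σ' ρ₁' ρ₂' : TyC)
    (hσ : interp L σT = some σ')
    (hρ₁ : interp L ρ₁ = some ρ₁')
    (hρ₂ : interp L ρ₂ = some ρ₂')
    (hstar : ∀ ρ : Ty, IsRec ρ →
      Typing [] (mixinTm R)
        (.arrow (.arrow σT (.inter ρ ρ₁)) (.arrow σT (.merge ρ ρ₂))))
    (S : Nat → TyC) (τ : Ty)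
    (hτ : interp L τ = some (substC S (tauM L R σ' ρ₁' ρ₂'))) :
    Typing [] (mixinTm R) τ := by
  obtain ⟨τ₀, τ₁, rfl, h₀, h₁⟩ := eq_inter_of_interp_eq_some hτ
  refine .inter ?_ ?_
  · have hτ₀ : τ₀ = .arrow (.arrow σT ρ₁) (.arrow σT ρ₂) := by
      refine eq_of_interp_eq_some h₀ ?_
      simp only [substC, substC_eq_self_of_interp_eq_some S hσ,
        substC_eq_self_of_interp_eq_some S hρ₁, substC_eq_self_of_interp_eq_some S hρ₂]
      simp [interp, hσ, hρ₁, hρ₂]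
    subst hτ₀
    refine .sub (hstar .empty .empty) (.arrow_mono (.arrow_mono (.refl σT) ?_)
      (.arrow_mono (.refl σT) (.merge_empty_l hr₂)))
    exact .le_inter hr₁.le_empty (.refl ρ₁)
  · rw [substC_interListC] at h₁
    refine typing_of_interp_eq_interListC ?_ h₁
    simp only [List.mem_map, Finset.mem_sort, Finset.mem_sdiff]
    rintro _ ⟨_, ⟨l, ⟨-, hl⟩, rfl⟩, rfl⟩ τ hτ
    exact mixinTm_typing_of_interp_eq_arrow_fld (by simpa [Tm.lblR] using hl) hτ

/-- **Translation soundness for mixins.** Let `M ≡ λc.Y(λt.λs.(c s) ⊕ R)` be a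
mixin and let `σ, ρ₁, ρ₂ ∈ 𝕋` be types on which `⟦·⟧` is defined (i.e. containing
neither `+` nor labels outside `𝓛`), with `ρ₁, ρ₂` record types,
`lbl(ρ₂) = lbl(R)`, and `⊢ M : (σ → ρ∩ρ₁) → (σ → ρ+ρ₂)` for every record type
`ρ`.  Then for every substitution `S` and every `τ ∈ 𝕋` with `⟦τ⟧ = S(τ_M)`
(syntactically), the judgment `⊢ M : τ` is derivable in `Λ_R`. -/
theorem translation_soundness (L : Finset Nat) (R : List (Nat × Tm))
    (hnd : (R.map Prod.fst).Nodup) (hfv : ∀ p ∈ R, FVBelow 3 p.2)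
    (σT ρ₁ ρ₂ : Ty) (hr₁ : IsRec ρ₁) (hr₂ : IsRec ρ₂)
    (σ' ρ₁' ρ₂' : TyC)
    (hσ : interp L σT = some σ')
    (hρ₁ : interp L ρ₁ = some ρ₁')
    (hρ₂ : interp L ρ₂ = some ρ₂')
    (hlbl : lbl ρ₂ = Tm.lblR R)
    (hstar : ∀ ρ : Ty, IsRec ρ →
      Typing [] (mixinTm R)
        (.arrow (.arrow σT (.inter ρ ρ₁)) (.arrow σT (.merge ρ ρ₂))))
    (S : Nat → TyC) (τ : Ty)
    (hτ : interp L τ = some (substC S (tauM L R σ' ρ₁' ρ₂'))) :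
    Typing [] (mixinTm R) τ :=
  translation_soundness_general L R σT ρ₁ ρ₂ hr₁ hr₂ σ' ρ₁' ρ₂' hσ hρ₁ hρ₂ hstar S τ hτ
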